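/- In any cycle of a dependency graph where WW/WR edges (T_i,T_j) imply commit(T_i) < start(T_j) and RW edges connect concurrent transactions, let T_0 be the first-committed transaction in the cycle. Then the cycle contains a length-2 path T_2 -RW-> T_1 -RW-> T_0 ending at T_0. -/
import Mathlib


inductive Lbl | WW | WR | RW
deriving DecidableEq

/-- Two transactions are concurrent if their `[start, commit]` intervals overlap. -/
def Concurrent {V : Type*} (start commit : V → ℝ) (i j : V) : Prop :=
  start i < commit j ∧ start j < commit i

/-- In any cycle (of length ≥ 3, taken cyclically) of a dependency graph where
WW/WR edges (Tᵢ,Tⱼ) imply commit(Tᵢ) < start(Tⱼ) and RW edges connect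
concurrent transactions, if T₀ = f j is the first-committed transaction of
the cycle, then the cycle contains a length-2 path T₂ -RW-> T₁ -RW-> T₀
ending at T₀. -/
theorem stmt_9 {V : Type*} (E : V → V → Lbl → Prop)
    (start commit : V → ℝ)
    (hsc : ∀ T, start T < commit T)
    (hinj : Function.Injective commit)
    (hOther : ∀ i j l, E i j l → l ≠ Lbl.RW → commit i < start j)
    (hRW : ∀ i j, E i j Lbl.RW → Concurrent start commit i j)
    (n : ℕ) (hn : 3 ≤ n) (f : ZMod n → V) (lbl : ZMod n → Lbl)
    (hcyc : ∀ i : ZMod n, E (f i) (f (i + 1)) (lbl i))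
    (j : ZMod n) (hmin : ∀ k : ZMod n, commit (f j) ≤ commit (f k)) :
    lbl (j - 1) = Lbl.RW ∧ lbl (j - 2) = Lbl.RW := by
  have h1 : E (f (j - 1)) (f j) (lbl (j - 1)) := by
    have := hcyc (j - 1); rwa [sub_add_cancel] at this
  have h2 : E (f (j - 2)) (f (j - 1)) (lbl (j - 2)) := by
    have := hcyc (j - 2)
    have e : j - 2 + 1 = j - 1 := by ring
    rwa [e] at this
  have hl1 : lbl (j - 1) = Lbl.RW := by
    by_contra h
    have := hOther _ _ _ h1 h
    exact absurd (hmin (j - 1)) (not_le.mpr (this.trans (hsc (f j))))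
  refine ⟨hl1, ?_⟩
  have hc : Concurrent start commit (f (j - 1)) (f j) := hRW _ _ (hl1 ▸ h1)
  by_contra h
  have := hOther _ _ _ h2 h
  exact absurd (hmin (j - 2)) (not_le.mpr (this.trans hc.1))
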